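/- Let r ≥ 2 be a natural number and define G : ℂ → ℂ by G(s) = (Λ(2s)/Λ(2s+r-1)) · (Λ(s+(r-1)/2)/Λ(s+(3r+1)/2)) · (Λ(s-(r+1)/2)/Λ(s+(r+1)/2)), where Λ is the completed Riemann zeta function. Then the function s ↦ (s - (r+1)/2) · G(s) tends to -Λ(r)/(Λ(2r)·Λ(2r+1)) as s tends to (r+1)/2 within ℂ \ {(r+1)/2}; that is, G has a simple pole at s = (r+1)/2 with residue -Λ(r)/(Λ(2r)·Λ(2r+1)). -/

import Mathlib

/-!
With `c = (r+1)/2` we have `G(s) = F(s) · Λ(s - c)`, where every argument of `Λ` occurring in `F`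
has real part `> 1` near `c`. There `Λ` is holomorphic and, by the Euler product, nonzero, so `F`
is continuous at `c` and the residue of `G` at `c` is `F(c) · Res_{s=0} Λ = -F(c)`, with
`F(c) = Λ(r+1)/Λ(2r) · Λ(r)/Λ(2r+1) / Λ(r+1)`.
-/

open Complex Filter Topology

lemma completedRiemannZeta_ne_zero_of_one_lt_re {s : ℂ} (hs : 1 < s.re) :
    completedRiemannZeta s ≠ 0 := by
  have hs0 : s ≠ 0 := by rintro rfl; norm_num at hs
  intro h
  exact riemannZeta_ne_zero_of_one_lt_re hs (by rw [riemannZeta_def_of_ne_zero hs0, h, zero_div])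

lemma ContinuousAt.completedRiemannZeta_of_one_lt_re {g : ℂ → ℂ} {c : ℂ} (hg : ContinuousAt g c)
    (hc : 1 < (g c).re) : ContinuousAt (fun s ↦ completedRiemannZeta (g s)) c := by
  refine (differentiableAt_completedZeta ?_ ?_).continuousAt.comp hg <;>
    rintro h <;> rw [h] at hc <;> norm_num at hc

lemma completedRiemannZeta_residue_zero :
    Tendsto (fun s ↦ s * completedRiemannZeta s) (𝓝[≠] 0) (𝓝 (-1)) := by
  simpa [HurwitzZeta.completedHurwitzZetaEven_zero] using
    HurwitzZeta.completedHurwitzZetaEven_residue_zero 0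

lemma tendsto_sub_mul_mul_completedRiemannZeta_sub {F : ℂ → ℂ} {c : ℂ} (hF : ContinuousAt F c) :
    Tendsto (fun s ↦ (s - c) * (F s * completedRiemannZeta (s - c))) (𝓝[≠] c) (𝓝 (-F c)) := by
  have hshift : Tendsto (· - c) (𝓝[≠] c) (𝓝[≠] 0) :=
    sub_self c ▸ ((Homeomorph.subRight c).map_punctured_nhds_eq c).le
  simpa [mul_left_comm] using (hF.tendsto.mono_left nhdsWithin_le_nhds).mul
    (completedRiemannZeta_residue_zero.comp hshift)

/-- The factor `G^{(2r+1,r)}(s)` from the constant-term formula (Proposition 4.1),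
`G(s) = Λ(2s)/Λ(2s+r-1) · Λ(s+(r-1)/2)/Λ(s+(3r+1)/2) · Λ(s-(r+1)/2)/Λ(s+(r+1)/2)`,
has a simple pole at `s = (r+1)/2` with residue `-Λ(r)/(Λ(2r)·Λ(2r+1))`. -/
theorem G_simple_pole (r : ℕ) (hr : 2 ≤ r) (G : ℂ → ℂ)
    (hG : ∀ s : ℂ, G s =
      (completedRiemannZeta (2 * s) / completedRiemannZeta (2 * s + (r : ℂ) - 1)) *
      (completedRiemannZeta (s + ((r : ℂ) - 1) / 2) /
        completedRiemannZeta (s + (3 * (r : ℂ) + 1) / 2)) *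
      (completedRiemannZeta (s - ((r : ℂ) + 1) / 2) /
        completedRiemannZeta (s + ((r : ℂ) + 1) / 2))) :
    Tendsto (fun s : ℂ => (s - ((r : ℂ) + 1) / 2) * G s)
      (nhdsWithin (((r : ℂ) + 1) / 2) {(((r : ℂ) + 1) / 2 : ℂ)}ᶜ)
      (nhds (-completedRiemannZeta (r : ℂ) /
        (completedRiemannZeta (2 * (r : ℂ)) * completedRiemannZeta (2 * (r : ℂ) + 1)))) := by
  set c : ℂ := ((r : ℂ) + 1) / 2
  have hr' : (2 : ℝ) ≤ r := by exact_mod_cast hr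
  have hΛ {g : ℂ → ℂ} (hg : ContinuousAt g c) (hgc : 1 < (g c).re) :
      ContinuousAt (fun s ↦ completedRiemannZeta (g s)) c ∧ completedRiemannZeta (g c) ≠ 0 :=
    ⟨hg.completedRiemannZeta_of_one_lt_re hgc, completedRiemannZeta_ne_zero_of_one_lt_re hgc⟩
  have h₁ := hΛ (g := fun s ↦ 2 * s) (by fun_prop) (by norm_num [c]; linarith)
  have h₂ := hΛ (g := fun s ↦ 2 * s + r - 1) (by fun_prop) (by norm_num [c]; linarith)
  have h₃ := hΛ (g := fun s ↦ s + (r - 1) / 2) (by fun_prop) (by norm_num [c]; linarith)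
  have h₄ := hΛ (g := fun s ↦ s + (3 * r + 1) / 2) (by fun_prop) (by norm_num [c]; linarith)
  have h₅ := hΛ (g := fun s ↦ s + c) (by fun_prop) (by norm_num [c]; linarith)
  set F : ℂ → ℂ := fun s ↦ completedRiemannZeta (2 * s) / completedRiemannZeta (2 * s + r - 1) *
    (completedRiemannZeta (s + (r - 1) / 2) / completedRiemannZeta (s + (3 * r + 1) / 2)) /
    completedRiemannZeta (s + c)
  have hF : ContinuousAt F c :=
    ((h₁.1.div h₂.1 h₂.2).mul (h₃.1.div h₄.1 h₄.2)).div h₅.1 h₅.2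
  have hFc : F c = completedRiemannZeta r /
      (completedRiemannZeta (2 * r) * completedRiemannZeta (2 * r + 1)) := by
    have hcc : c + c = r + 1 := by ring
    rw [hcc] at h₅
    simp only [F]
    rw [show 2 * c + r - 1 = 2 * r by ring, show 2 * c = r + 1 by ring,
      show c + (r - 1) / 2 = r by ring, show c + (3 * r + 1) / 2 = 2 * r + 1 by ring, hcc]
    field_simp [h₅.2]
  have hlim := tendsto_sub_mul_mul_completedRiemannZeta_sub hF
  rw [hFc, ← neg_div] at hlim
  refine hlim.congr fun s ↦ ?_
  simp only [F, hG]
  ring
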